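/- On the 2N-fold tensor product of ℂ^2 ⊗ ℂ^2 (two qubits per unit cell, N unit cells viewed as 2N qubit sites), let U_x = (1⊗σ_x)^{⊗N}, U_z = (1⊗σ_z)^{⊗N}, U_{xz} = (σ_x⊗σ_z)^{⊗N}, let X_glob = σ_x^{⊗2N} and Z_glob = σ_z^{⊗2N} be the global ℤ_2×ℤ_2 symmetries, and let T be the cyclic shift by one qubit site. Suppose |Ψ⟩ is a simultaneous eigenvector of T, X_glob (eigenvalue (-1)^{Q_x}) and Z_glob (eigenvalue (-1)^{Q_z}). Then U_x|Ψ⟩, U_z|Ψ⟩, U_{xz}|Ψ⟩ are T-eigenvectors whose eigenvalues equal that of |Ψ⟩ multiplied by (-1)^{Q_x}, (-1)^{Q_z}, and (-1)^{N+Q_x+Q_z} respectively. -/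
import Mathlib


open Matrix Complex

/-- The cyclic coordinate shift: `(shiftIdx L q g) i = g (i+1 mod L)`. -/
def shiftIdx (L q : ℕ) (g : Fin L → Fin q) : Fin L → Fin q :=
  fun i => g ⟨(i.val + 1) % L, Nat.mod_lt _ (Nat.lt_of_le_of_lt (Nat.zero_le _) i.isLt)⟩

/-- The translation (cyclic shift) unitary on `(ℂ^q)^{⊗L}`, acting on basis vectors by
`|a_1 ... a_L⟩ ↦ |a_L a_1 ... a_{L-1}⟩`. -/
noncomputable def Tshift (L q : ℕ) : Matrix (Fin L → Fin q) (Fin L → Fin q) ℂ :=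
  Matrix.of fun f g => if shiftIdx L q f = g then 1 else 0

/-- The tensor product operator `A_1 ⊗ ... ⊗ A_L` acting as `A i` on the i-th factor. -/
noncomputable def tens (L q : ℕ) (A : Fin L → Matrix (Fin q) (Fin q) ℂ) :
    Matrix (Fin L → Fin q) (Fin L → Fin q) ℂ :=
  Matrix.of fun f g => ∏ i, A i (f i) (g i)

/-- Pauli X. -/
noncomputable def σx : Matrix (Fin 2) (Fin 2) ℂ := !![0, 1; 1, 0]

/-- Pauli Z. -/
noncomputable def σz : Matrix (Fin 2) (Fin 2) ℂ := !![1, 0; 0, -1]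

/-- `U_x = (1 ⊗ σ_x)^{⊗N}` on `N` two-qubit unit cells (σ_x on odd qubit sites). -/
noncomputable def Ux (N : ℕ) := tens (2 * N) 2 fun i => if i.val % 2 = 1 then σx else 1

/-- `U_z = (1 ⊗ σ_z)^{⊗N}`. -/
noncomputable def Uz (N : ℕ) := tens (2 * N) 2 fun i => if i.val % 2 = 1 then σz else 1

/-- `U_{xz} = (σ_x ⊗ σ_z)^{⊗N}`. -/
noncomputable def Uxz (N : ℕ) := tens (2 * N) 2 fun i => if i.val % 2 = 0 then σx else σz

/-- Global ℤ_2 symmetry `X_glob = σ_x^{⊗2N}`. -/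
noncomputable def Xglob (N : ℕ) := tens (2 * N) 2 fun _ => σx

/-- Global ℤ_2 symmetry `Z_glob = σ_z^{⊗2N}`. -/
noncomputable def Zglob (N : ℕ) := tens (2 * N) 2 fun _ => σz

-- auxiliary lemmas (added above the pinned theorem)

lemma tens_mul (L q : ℕ) (A B : Fin L → Matrix (Fin q) (Fin q) ℂ) :
    tens L q A * tens L q B = tens L q (fun i => A i * B i) := by
  ext f g
  simp only [tens, Matrix.mul_apply, Matrix.of_apply]
  rw [Finset.prod_univ_sum, ← Fintype.piFinset_univ]
  exact Finset.sum_congr rfl fun h _ => Finset.prod_mul_distrib.symm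

lemma tens_smul (L q : ℕ) (c : Fin L → ℂ) (A : Fin L → Matrix (Fin q) (Fin q) ℂ) :
    tens L q (fun i => c i • A i) = (∏ i, c i) • tens L q A := by
  ext f g
  simp [tens, Finset.prod_mul_distrib]

def rotL (L : ℕ) (hL : 0 < L) : Fin L ≃ Fin L where
  toFun i := ⟨(i.val + 1) % L, Nat.mod_lt _ hL⟩
  invFun i := ⟨(i.val + (L - 1)) % L, Nat.mod_lt _ hL⟩
  left_inv i := by
    ext
    simp only
    rw [Nat.mod_add_mod]
    have h : i.val + 1 + (L - 1) = i.val + L := by omega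
    rw [h, Nat.add_mod_right, Nat.mod_eq_of_lt i.isLt]
  right_inv i := by
    ext
    simp only
    rw [Nat.mod_add_mod]
    have h : i.val + (L - 1) + 1 = i.val + L := by omega
    rw [h, Nat.add_mod_right, Nat.mod_eq_of_lt i.isLt]

lemma Tshift_mul_tens (L q : ℕ) (hL : 0 < L)
    (A B : Fin L → Matrix (Fin q) (Fin q) ℂ)
    (hAB : ∀ i, B (rotL L hL i) = A i) :
    Tshift L q * tens L q A = tens L q B * Tshift L q := by
  ext f g
  simp only [Tshift, tens, Matrix.mul_apply, Matrix.of_apply, ite_mul, one_mul, zero_mul,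
    mul_ite, mul_one, mul_zero]
  rw [Finset.sum_ite_eq Finset.univ (shiftIdx L q f)]
  have hcond : ∀ h : Fin L → Fin q,
      (shiftIdx L q h = g) ↔ (h = fun j => g ((rotL L hL).symm j)) := by
    intro h
    constructor
    · intro H
      funext j
      have h1 := congrFun H ((rotL L hL).symm j)
      have h2 : shiftIdx L q h ((rotL L hL).symm j) = h j := by
        show h (rotL L hL ((rotL L hL).symm j)) = h j
        rw [Equiv.apply_symm_apply]
      rw [h2] at h1
      exact h1
    · intro H
      funext i
      have : shiftIdx L q h i = h (rotL L hL i) := rfl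
      rw [this, H]
      simp
  simp_rw [hcond]
  rw [Finset.sum_ite_eq' Finset.univ (fun j => g ((rotL L hL).symm j))]
  simp only [Finset.mem_univ, if_true]
  refine Fintype.prod_equiv (rotL L hL) _ _ (fun i => ?_)
  rw [hAB i, Equiv.symm_apply_apply]
  rfl

lemma hxx : σx * σx = 1 := by
  ext i j; fin_cases i <;> fin_cases j <;>
    simp [σx, Matrix.mul_apply, Fin.sum_univ_two]

lemma hzz : σz * σz = 1 := by
  ext i j; fin_cases i <;> fin_cases j <;>
    simp [σz, Matrix.mul_apply, Fin.sum_univ_two]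

lemma q1 : σx * (σz * σz) = σx := by
  ext i j; fin_cases i <;> fin_cases j <;>
    simp [σx, σz, Matrix.mul_apply, Fin.sum_univ_two]
lemma q2 : (-1:ℂ) • (σx * (σz * σx)) = σz := by
  ext i j; fin_cases i <;> fin_cases j <;>
    simp [σx, σz, Matrix.mul_apply, Fin.sum_univ_two]
lemma p1 : σx * (σz * σx) = (-1:ℂ) • (σx * (σx * σz)) := by
  ext i j; fin_cases i <;> fin_cases j <;>
    simp [σx, σz, Matrix.mul_apply, Fin.sum_univ_two]
lemma p2 : σx * (σz * σz) = (-1:ℂ) • (σz * (σx * σz)) := by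
  ext i j; fin_cases i <;> fin_cases j <;>
    simp [σx, σz, Matrix.mul_apply, Fin.sum_univ_two]

lemma prod_sign (n : ℕ) :
    (∏ i ∈ Finset.range (2*n), (if i % 2 = 0 then (-1:ℂ) else 1)) = (-1)^n := by
  induction n with
  | zero => simp
  | succ k ih =>
    have : 2 * (k+1) = (2*k + 1) + 1 := by ring
    rw [this, Finset.prod_range_succ, Finset.prod_range_succ, ih]
    have h1 : (2*k + 1) % 2 = 1 := by omega
    have h2 : (2*k) % 2 = 0 := by omega
    rw [h1, h2]
    simp [pow_succ]

lemma eig_step (L q : ℕ) (U G : Matrix (Fin L → Fin q) (Fin L → Fin q) ℂ) (c : ℂ)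
    (hTU : Tshift L q * U = (c • (U * G)) * Tshift L q)
    (lam μ : ℂ) (ψ : (Fin L → Fin q) → ℂ)
    (hT : (Tshift L q).mulVec ψ = lam • ψ)
    (hG : G.mulVec ψ = μ • ψ) :
    (Tshift L q).mulVec (U.mulVec ψ) = (c * μ * lam) • U.mulVec ψ := by
  rw [Matrix.mulVec_mulVec, hTU, ← Matrix.mulVec_mulVec, hT, Matrix.mulVec_smul,
    Matrix.smul_mulVec, ← Matrix.mulVec_mulVec, hG, Matrix.mulVec_smul]
  rw [smul_smul, smul_smul]
  ring_nf

section MainProof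

variable (N : ℕ)

lemma key_parity (N : ℕ) (i : Fin (2*N)) :
    ((i.val + 1) % (2*N)) % 2 = (i.val + 1) % 2 :=
  Nat.mod_mod_of_dvd _ ⟨N, rfl⟩

/-- T Ux = (Ux Xglob) T -/
lemma TUx (N : ℕ) (hL : 0 < 2*N) :
    Tshift (2*N) 2 * Ux N = ((1:ℂ) • (Ux N * Xglob N)) * Tshift (2*N) 2 := by
  have h1 : Tshift (2*N) 2 * Ux N
      = tens (2*N) 2 (fun i => σx * (if i.val % 2 = 1 then σx else 1)) * Tshift (2*N) 2 := by
    refine Tshift_mul_tens (2*N) 2 hL _ _ (fun i => ?_)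
    show σx * (if ((i.val + 1) % (2*N)) % 2 = 1 then σx else 1)
        = (if i.val % 2 = 1 then σx else 1)
    rw [key_parity]
    rcases Nat.mod_two_eq_zero_or_one i.val with h | h
    · have h' : (i.val + 1) % 2 = 1 := by omega
      simp [h, h', hxx]
    · have h' : (i.val + 1) % 2 = 0 := by omega
      simp [h, h']
  rw [h1, one_smul]
  congr 1
  rw [Ux, Xglob, tens_mul]
  refine congrArg (tens (2*N) 2) (funext fun i => ?_)
  rcases Nat.mod_two_eq_zero_or_one i.val with h | h <;> simp [h]

/-- T Uz = (Uz Zglob) T -/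
lemma TUz (N : ℕ) (hL : 0 < 2*N) :
    Tshift (2*N) 2 * Uz N = ((1:ℂ) • (Uz N * Zglob N)) * Tshift (2*N) 2 := by
  have h1 : Tshift (2*N) 2 * Uz N
      = tens (2*N) 2 (fun i => σz * (if i.val % 2 = 1 then σz else 1)) * Tshift (2*N) 2 := by
    refine Tshift_mul_tens (2*N) 2 hL _ _ (fun i => ?_)
    show σz * (if ((i.val + 1) % (2*N)) % 2 = 1 then σz else 1)
        = (if i.val % 2 = 1 then σz else 1)
    rw [key_parity]
    rcases Nat.mod_two_eq_zero_or_one i.val with h | h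
    · have h' : (i.val + 1) % 2 = 1 := by omega
      simp [h, h', hzz]
    · have h' : (i.val + 1) % 2 = 0 := by omega
      simp [h, h']
  rw [h1, one_smul]
  congr 1
  rw [Uz, Zglob, tens_mul]
  refine congrArg (tens (2*N) 2) (funext fun i => ?_)
  rcases Nat.mod_two_eq_zero_or_one i.val with h | h <;> simp [h]

/-- T Uxz = ((-1)^N Uxz (Xglob Zglob)) T -/
lemma TUxz (N : ℕ) (hL : 0 < 2*N) :
    Tshift (2*N) 2 * Uxz N
      = (((-1:ℂ)^N) • (Uxz N * (Xglob N * Zglob N))) * Tshift (2*N) 2 := by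
  have h1 : Tshift (2*N) 2 * Uxz N
      = tens (2*N) 2 (fun i => (if i.val % 2 = 0 then (-1:ℂ) else 1) •
          (σx * (σz * (if i.val % 2 = 0 then σx else σz)))) * Tshift (2*N) 2 := by
    refine Tshift_mul_tens (2*N) 2 hL _ _ (fun i => ?_)
    show (if ((i.val + 1) % (2*N)) % 2 = 0 then (-1:ℂ) else 1) •
          (σx * (σz * (if ((i.val + 1) % (2*N)) % 2 = 0 then σx else σz)))
        = (if i.val % 2 = 0 then σx else σz)
    rw [key_parity]
    rcases Nat.mod_two_eq_zero_or_one i.val with h | h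
    · have h' : (i.val + 1) % 2 = 1 := by omega
      simp only [h, h', if_true, if_neg (by norm_num : ¬(1 = 0))]
      rw [q1, one_smul]
    · have h' : (i.val + 1) % 2 = 0 := by omega
      simp only [h, h', if_true, if_neg (by norm_num : ¬(1 = 0))]
      exact q2
  rw [h1]
  congr 1
  rw [tens_smul]
  have hprod : (∏ i : Fin (2*N), (if i.val % 2 = 0 then (-1:ℂ) else 1)) = (-1:ℂ)^N := by
    rw [Fin.prod_univ_eq_prod_range (fun j => if j % 2 = 0 then (-1:ℂ) else 1) (2*N)]
    exact prod_sign N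
  rw [hprod]
  congr 1
  have hpt : (fun i : Fin (2*N) => σx * (σz * (if i.val % 2 = 0 then σx else σz)))
      = (fun i : Fin (2*N) => (-1:ℂ) •
          ((if i.val % 2 = 0 then σx else σz) * (σx * σz))) := by
    funext i
    rcases Nat.mod_two_eq_zero_or_one i.val with h | h
    · simp only [h, if_true]
      exact p1
    · simp only [h, if_neg (by norm_num : ¬(1 = 0))]
      exact p2
  rw [hpt, tens_smul, Finset.prod_const, Finset.card_univ, Fintype.card_fin]
  have hone : ((-1:ℂ))^(2*N) = 1 := by
    rw [pow_mul]
    norm_num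
  rw [hone, one_smul]
  rw [Uxz, Xglob, Zglob, tens_mul, tens_mul]

end MainProof

/-- projective ℤ_2×ℤ_2 chain sector relations. For a simultaneous eigenvector
`Ψ` of the cyclic shift `T`, `X_glob` (eigenvalue `(-1)^{Q_x}`) and `Z_glob` (eigenvalue
`(-1)^{Q_z}`), the states `U_x Ψ`, `U_z Ψ`, `U_{xz} Ψ` are `T`-eigenvectors with eigenvalues
`(-1)^{Q_x} λ`, `(-1)^{Q_z} λ`, `(-1)^{N+Q_x+Q_z} λ` respectively. -/
theorem Z2Z2_sector_relations (N : ℕ) (hN : 0 < N) (Qx Qz : ℤ) (lam : ℂ)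
    (Ψ : (Fin (2 * N) → Fin 2) → ℂ) (hΨ : Ψ ≠ 0)
    (heigT : (Tshift (2 * N) 2).mulVec Ψ = lam • Ψ)
    (heigX : (Xglob N).mulVec Ψ = ((-1 : ℂ) ^ Qx) • Ψ)
    (heigZ : (Zglob N).mulVec Ψ = ((-1 : ℂ) ^ Qz) • Ψ) :
    (Tshift (2 * N) 2).mulVec ((Ux N).mulVec Ψ) =
        ((-1 : ℂ) ^ Qx * lam) • (Ux N).mulVec Ψ ∧
      (Tshift (2 * N) 2).mulVec ((Uz N).mulVec Ψ) =
        ((-1 : ℂ) ^ Qz * lam) • (Uz N).mulVec Ψ ∧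
      (Tshift (2 * N) 2).mulVec ((Uxz N).mulVec Ψ) =
        ((-1 : ℂ) ^ ((N : ℤ) + Qx + Qz) * lam) • (Uxz N).mulVec Ψ := by
  have hL : 0 < 2*N := by omega
  have hGxz : (Xglob N * Zglob N).mulVec Ψ = (((-1:ℂ)^Qx * (-1:ℂ)^Qz)) • Ψ := by
    rw [← Matrix.mulVec_mulVec, heigZ, Matrix.mulVec_smul, heigX, smul_smul, mul_comm ((-1:ℂ)^Qz)]
  refine ⟨?_, ?_, ?_⟩
  · have := eig_step (2*N) 2 (Ux N) (Xglob N) 1 (TUx N hL) lam ((-1:ℂ)^Qx) Ψ heigT heigX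
    rw [this, one_mul]
  · have := eig_step (2*N) 2 (Uz N) (Zglob N) 1 (TUz N hL) lam ((-1:ℂ)^Qz) Ψ heigT heigZ
    rw [this, one_mul]
  · have h := eig_step (2*N) 2 (Uxz N) (Xglob N * Zglob N) ((-1:ℂ)^N) (TUxz N hL) lam
      ((-1:ℂ)^Qx * (-1:ℂ)^Qz) Ψ heigT hGxz
    rw [h]
    congr 1
    have hne : (-1:ℂ) ≠ 0 := by norm_num
    rw [zpow_add₀ hne, zpow_add₀ hne, zpow_natCast]
    ring
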